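/- The Talmud rule is well-defined in the high-estate regime: if (∑ i, d i)/2 < E ≤ ∑ i, d i with d i ≥ 0, then there exists θ ≥ 0 such that ∑ i, max (d i / 2) (d i − θ) = E. -/
import Mathlib


/-- Well-definedness of the Talmud rule in the high-estate regime: if
`(∑ d)/2 < E ≤ ∑ d` with nonnegative claims, there exists `θ ≥ 0` with
`∑ i, max (d i / 2) (d i - θ) = E`. -/
theorem stmt_4 {ι : Type*} [Fintype ι] (d : ι → ℝ) (E : ℝ)
    (hd : ∀ i, 0 ≤ d i) (hElow : (∑ i, d i) / 2 < E) (hEhigh : E ≤ ∑ i, d i) :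
    ∃ θ : ℝ, 0 ≤ θ ∧ ∑ i, max (d i / 2) (d i - θ) = E := by
  set f : ℝ → ℝ := fun θ => ∑ i, max (d i / 2) (d i - θ) with hf
  have hcont : Continuous f := by
    apply continuous_finset_sum
    intro i _
    exact continuous_const.max (continuous_const.sub continuous_id)
  set M : ℝ := (∑ i, d i) / 2 with hM
  have hM0 : 0 ≤ M := by
    have : 0 ≤ ∑ i, d i := Finset.sum_nonneg fun i _ => hd i
    positivity
  have hf0 : f 0 = ∑ i, d i := by
    simp only [hf]
    refine Finset.sum_congr rfl fun i _ => ?_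
    have h := hd i
    rw [max_eq_right] <;> linarith
  have hfM : f M = M := by
    have hle : ∀ i, d i ≤ ∑ j, d j := fun i =>
      Finset.single_le_sum (fun j _ => hd j) (Finset.mem_univ i)
    simp only [hf]
    rw [show M = ∑ i, d i / 2 by rw [hM, Finset.sum_div]]
    refine Finset.sum_congr rfl fun i _ => ?_
    rw [max_eq_left]
    have h1 := hle i
    have h2 : ∑ j, d j / 2 = (∑ j, d j) / 2 := (Finset.sum_div _ _ _).symm
    linarith
  have key : E ∈ Set.Icc (f M) (f 0) := by
    constructor
    · rw [hfM]; exact le_of_lt hElow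
    · rw [hf0]; exact hEhigh
  have := intermediate_value_Icc' hM0 hcont.continuousOn key
  obtain ⟨θ, hθmem, hθ⟩ := this
  exact ⟨θ, hθmem.1, hθ⟩
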